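/- Let H(x,y) = y²/2 − x²/2 + x⁴/4. Then (−3xy)·(−3xy·dH + d(xy³)) = (8x²y² − 4H·x² − x² + y²)·dH + dR for some polynomial R(x,y), where H is substituted by its polynomial expression. -/

import Mathlib

noncomputable def pdx (F : ℝ → ℝ → ℝ) (x y : ℝ) : ℝ := deriv (fun t => F t y) x
noncomputable def pdy (F : ℝ → ℝ → ℝ) (x y : ℝ) : ℝ := deriv (fun t => F x t) y

noncomputable def H (x y : ℝ) : ℝ := y^2/2 - x^2/2 + x^4/4

/-- evaluation at (x,y) of the partial derivative ∂R/∂x of a real polynomial R(x,y) -/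
noncomputable def Rx (R : MvPolynomial (Fin 2) ℝ) (x y : ℝ) : ℝ :=
  MvPolynomial.eval ![x, y] (MvPolynomial.pderiv 0 R)

/-- evaluation at (x,y) of the partial derivative ∂R/∂y of a real polynomial R(x,y) -/
noncomputable def Ry (R : MvPolynomial (Fin 2) ℝ) (x y : ℝ) : ℝ :=
  MvPolynomial.eval ![x, y] (MvPolynomial.pderiv 1 R)

lemma pdx_H (x y : ℝ) : pdx H x y = x ^ 3 - x := by
  simp (disch := fun_prop) only [pdx, H, deriv_fun_add, deriv_fun_sub, deriv_div_const,
    deriv_fun_pow, deriv_const', deriv_id'']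
  ring

lemma pdy_H (x y : ℝ) : pdy H x y = y := by
  simp (disch := fun_prop) only [pdy, H, deriv_fun_add, deriv_fun_sub, deriv_div_const,
    deriv_fun_pow, deriv_const', deriv_id'']
  ring

lemma pdx_mul_pow (n : ℕ) (x y : ℝ) : pdx (fun x y => x * y ^ n) x y = y ^ n := by
  simp [pdx]

lemma pdy_mul_pow (n : ℕ) (x y : ℝ) :
    pdy (fun x y => x * y ^ n) x y = n * x * y ^ (n - 1) := by
  simp (disch := fun_prop) only [pdy, deriv_fun_mul, deriv_const', deriv_fun_pow, deriv_id'']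
  ring

/- The 1-form (-3xy)(-3xy dH + d(xy³)) - (8x²y² - 4Hx² - x² + y²) dH is closed with polynomial
coefficients; this is its primitive. -/
open MvPolynomial in
noncomputable def eightLoopR : MvPolynomial (Fin 2) ℝ :=
  C (1/2) * X 0 ^ 6 * X 1 ^ 2 - X 0 ^ 4 * X 1 ^ 2 + C (1/2) * X 0 ^ 2 * X 1 ^ 2
  - C (3/2) * X 0 ^ 2 * X 1 ^ 4 + C (1/10) * X 0 ^ 10 - C (3/8) * X 0 ^ 8
  + C (1/2) * X 0 ^ 6 - C (1/4) * X 0 ^ 4 - C (1/4) * X 1 ^ 4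

section
open MvPolynomial

lemma Rx_eightLoopR (x y : ℝ) : Rx eightLoopR x y =
    3*x^5*y^2 - 4*x^3*y^2 + x*y^2 - 3*x*y^4 + x^9 - 3*x^7 + 3*x^5 - x^3 := by
  simp only [Rx, eightLoopR, map_add, map_sub, Derivation.leibniz, Derivation.leibniz_pow,
    pderiv_X, derivation_C, Pi.single_apply, eval_mul, eval_pow, eval_C, eval_X,
    smul_eq_mul, nsmul_eq_mul]
  norm_num
  ring

lemma Ry_eightLoopR (x y : ℝ) : Ry eightLoopR x y =
    x^6*y - 2*x^4*y + x^2*y - 6*x^2*y^3 - y^3 := by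
  simp only [Ry, eightLoopR, map_add, map_sub, Derivation.leibniz, Derivation.leibniz_pow,
    pderiv_X, derivation_C, Pi.single_apply, eval_mul, eval_pow, eval_C, eval_X,
    smul_eq_mul, nsmul_eq_mul]
  norm_num
  ring

end

/-- Lemma 3(a), eight loop: (−3xy)·(−3xy·dH + d(xy³)) = (8x²y² − 4Hx² − x² + y²)·dH + dR -/
theorem rel_exact : ∃ R : MvPolynomial (Fin 2) ℝ, ∀ x y : ℝ,
    (-3*x*y) * ((-3*x*y) * pdx H x y + pdx (fun x y => x * y^3) x y)
      = (8*x^2*y^2 - 4 * H x y * x^2 - x^2 + y^2) * pdx H x y + Rx R x y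
  ∧ (-3*x*y) * ((-3*x*y) * pdy H x y + pdy (fun x y => x * y^3) x y)
      = (8*x^2*y^2 - 4 * H x y * x^2 - x^2 + y^2) * pdy H x y + Ry R x y := by
  refine ⟨eightLoopR, fun x y => ⟨?_, ?_⟩⟩
  · rw [pdx_H, pdx_mul_pow, Rx_eightLoopR, H]
    ring
  · rw [pdy_H, pdy_mul_pow, Ry_eightLoopR, H]
    ring
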